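/- arXiv:2603.15588 — 2 statements merged into one kernel-verified Lean document; each statement's English description precedes it below -/
import Mathlib

section
/- Let X be symmetric positive definite and K diagonal with 0 ≺ K ≺ 2X⁻¹. Then the spectral radius of A = I − XK is strictly less than 1. -/
open Matrix
open scoped ComplexOrder MatrixOrder

/-
If `(X K) v = r v` with `v ≠ 0`, put `u = K v`. Then `u* X u = r (v* K v)` with both quadratic
forms positive, so `r` is a positive real; and `X⁻¹ v = r⁻¹ u` turns positivity of
`v* (2 X⁻¹ - K) v = (2 - r) r⁻¹ (v* K v)` into `r < 2`. The eigenvalues `1 - r` of `1 - X K`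
therefore lie in `(-1, 1)`. Complex eigenvectors of the real matrices are handled by viewing
`X` and `K` as positive definite complex matrices.
-/

theorem RCLike.norm_one_sub_lt_one {𝕜 : Type*} [RCLike 𝕜] {z : 𝕜} (h0 : 0 < z) (h2 : z < 2) :
    ‖1 - z‖ < 1 := by
  obtain ⟨x, hx, rfl⟩ := RCLike.pos_iff_exists_ofReal.mp h0
  have hx2 : x < 2 := by exact_mod_cast h2
  rw [← RCLike.ofReal_one, ← RCLike.ofReal_sub, RCLike.norm_ofReal, abs_lt]
  constructor <;> linarith

namespace Matrix

variable {n : Type*} [Fintype n]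

theorem map_nonsing_inv [DecidableEq n] {R S : Type*} [CommRing R] [CommRing S] (f : R →+* S)
    {A : Matrix n n R} (hA : IsUnit A.det) : A⁻¹.map f = (A.map f)⁻¹ :=
  (inv_eq_left_inv <| by
    rw [← RingHom.mapMatrix_apply, ← RingHom.mapMatrix_apply, ← map_mul,
      nonsing_inv_mul A hA, map_one]).symm

theorem exists_mulVec_eq_smul_of_mem_spectrum [DecidableEq n] {K : Type*} [Field K]
    {A : Matrix n n K} {μ : K} (h : μ ∈ spectrum K A) : ∃ v ≠ 0, A *ᵥ v = μ • v := by
  rw [← spectrum_toLin', ← Module.End.hasEigenvalue_iff_mem_spectrum] at h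
  obtain ⟨v, hv⟩ := h.exists_hasEigenvector
  exact ⟨v, hv.2, by simpa using hv.apply_eq_smul⟩

variable {𝕜 : Type*} [RCLike 𝕜]

theorem PosSemidef.map_algebraMap {M : Matrix n n ℝ} (hM : M.PosSemidef) :
    (M.map (algebraMap ℝ 𝕜)).PosSemidef := by
  classical
  obtain ⟨B, rfl⟩ := CStarAlgebra.nonneg_iff_eq_star_mul_self.mp hM.nonneg
  have hmap : (star B * B).map (algebraMap ℝ 𝕜)
      = (B.map (algebraMap ℝ 𝕜))ᴴ * B.map (algebraMap ℝ 𝕜) := by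
    ext i j
    simp [Matrix.mul_apply]
  rw [hmap]
  exact posSemidef_conjTranspose_mul_self _

theorem PosDef.map_algebraMap [DecidableEq n] {M : Matrix n n ℝ} (hM : M.PosDef) :
    (M.map (algebraMap ℝ 𝕜)).PosDef :=
  hM.posSemidef.map_algebraMap.posDef_iff_isUnit.mpr
    (hM.isUnit.map (algebraMap ℝ 𝕜).mapMatrix)

section EigenvalueOfProduct

variable {X K : Matrix n n 𝕜} {v : n → 𝕜} {r : 𝕜}

theorem dotProduct_mulVec_mulVec_of_mul_mulVec_eq_smul (hK : K.IsHermitian)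
    (h : (X * K) *ᵥ v = r • v) :
    star (K *ᵥ v) ⬝ᵥ X *ᵥ (K *ᵥ v) = r * (star v ⬝ᵥ K *ᵥ v) := by
  rw [mulVec_mulVec, h, dotProduct_smul, smul_eq_mul, star_mulVec, hK.eq, ← dotProduct_mulVec]

theorem PosDef.pos_of_mul_mulVec_eq_smul (hX : X.PosDef) (hK : K.PosDef) (hv : v ≠ 0)
    (h : (X * K) *ᵥ v = r • v) : 0 < r := by
  have hk : 0 < star v ⬝ᵥ K *ᵥ v := hK.dotProduct_mulVec_pos hv
  have hKv : K *ᵥ v ≠ 0 := fun h0 => by simp [h0] at hk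
  have hrk := hX.dotProduct_mulVec_pos hKv
  rw [dotProduct_mulVec_mulVec_of_mul_mulVec_eq_smul hK.isHermitian h] at hrk
  simpa [hk.ne'] using div_pos hrk hk

theorem PosDef.lt_two_of_mul_mulVec_eq_smul [DecidableEq n] (hX : X.PosDef) (hK : K.PosDef)
    (h2 : ((2 : ℝ) • X⁻¹ - K).PosDef) (hv : v ≠ 0) (h : (X * K) *ᵥ v = r • v) : r < 2 := by
  have hr : 0 < r := hX.pos_of_mul_mulVec_eq_smul hK hv h
  have hk : 0 < star v ⬝ᵥ K *ᵥ v := hK.dotProduct_mulVec_pos hv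
  have hXinv : X⁻¹ *ᵥ v = r⁻¹ • K *ᵥ v := by
    have hKv : r • X⁻¹ *ᵥ v = K *ᵥ v := by
      rw [← mulVec_smul, ← h, mulVec_mulVec, ← Matrix.mul_assoc,
        nonsing_inv_mul _ ((isUnit_iff_isUnit_det X).mp hX.isUnit), Matrix.one_mul]
    rw [← hKv, smul_smul, inv_mul_cancel₀ hr.ne', one_smul]
  have hq := h2.dotProduct_mulVec_pos hv
  rw [sub_mulVec, smul_mulVec, hXinv, dotProduct_sub, dotProduct_smul, dotProduct_smul] at hq
  have hfactor : (2 : ℝ) • r⁻¹ • (star v ⬝ᵥ K *ᵥ v) - star v ⬝ᵥ K *ᵥ v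
      = (2 - r) * (r⁻¹ * star v ⬝ᵥ K *ᵥ v) := by
    rw [RCLike.real_smul_eq_coe_mul, smul_eq_mul, RCLike.ofReal_ofNat]
    field_simp
  rw [hfactor] at hq
  have hpos : 0 < r⁻¹ * star v ⬝ᵥ K *ᵥ v := mul_pos (inv_pos.mpr hr) hk
  simpa [hpos.ne'] using div_pos hq hpos

theorem PosDef.norm_lt_one_of_mem_spectrum_one_sub_mul [DecidableEq n] (hX : X.PosDef)
    (hK : K.PosDef) (h2 : ((2 : ℝ) • X⁻¹ - K).PosDef) {μ : 𝕜}
    (hμ : μ ∈ spectrum 𝕜 (1 - X * K)) : ‖μ‖ < 1 := by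
  rw [← map_one (algebraMap 𝕜 (Matrix n n 𝕜)), ← spectrum.singleton_sub_eq] at hμ
  obtain ⟨_, rfl, r, hr, rfl⟩ := hμ
  obtain ⟨v, hv, h⟩ := exists_mulVec_eq_smul_of_mem_spectrum hr
  exact RCLike.norm_one_sub_lt_one (hX.pos_of_mul_mulVec_eq_smul hK hv h)
    (hX.lt_two_of_mul_mulVec_eq_smul hK h2 hv h)

end EigenvalueOfProduct

end Matrix

theorem stmt_3_general {n : ℕ} (X K : Matrix (Fin n) (Fin n) ℝ)
    (hX : X.PosDef)
    (hK : K.PosDef) (hK2 : ((2 : ℝ) • X⁻¹ - K).PosDef) :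
    ∀ μ ∈ spectrum ℂ ((1 - X * K).map (Complex.ofReal)), ‖μ‖ < 1 := by
  intro μ hμ
  set f : ℝ →+* ℂ := algebraMap ℝ ℂ
  have hmap : (1 - X * K).map Complex.ofReal = 1 - X.map f * K.map f := by
    change f.mapMatrix (1 - X * K) = _
    rw [map_sub, map_one, map_mul]
    rfl
  have h2f : ((2 : ℝ) • (X.map f)⁻¹ - K.map f).PosDef := by
    have hmap2 : ((2 : ℝ) • X⁻¹ - K).map f = (2 : ℝ) • (X.map f)⁻¹ - K.map f := by
      rw [← map_nonsing_inv f ((isUnit_iff_isUnit_det X).mp hX.isUnit)]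
      ext i j
      simp [map_ofNat]
    exact hmap2 ▸ hK2.map_algebraMap
  exact hX.map_algebraMap.norm_lt_one_of_mem_spectrum_one_sub_mul hK.map_algebraMap h2f
    (hmap ▸ hμ)

theorem stmt_3 {n : ℕ} (X K : Matrix (Fin n) (Fin n) ℝ)
    (hX : X.PosDef)
    (hKdiag : K.IsDiag) (hK : K.PosDef) (hK2 : ((2 : ℝ) • X⁻¹ - K).PosDef) :
    ∀ μ ∈ spectrum ℂ ((1 - X * K).map (Complex.ofReal)), ‖μ‖ < 1 :=
  stmt_3_general X K hX hK hK2
end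

section
/- Under the droop update q(t+1) = q(t) − K(v(t) − v_ref(t)) with v(t) = R p(t) + X q(t) + 1, if the power injection is constant p(t) ≡ p̄ and the reference is constant v_ref(t) ≡ v̄_ref, and K is diagonal positive with K ≺ 2X⁻¹ and X symmetric positive definite, then v(t) → v̄_ref as t → ∞. -/
/-
With `S = X^{1/2}` (symmetric and invertible), `(I - XK) S = S C` for the symmetric matrix
`C = I - SKS`. The hypotheses say exactly that `I - C = SKS` and `I + C = S (2X⁻¹ - K) S` are
positive definite, i.e. every eigenvalue of `C` lies in `(-1, 1)`. Hence `Cᵗ → 0`, so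
`(I - XK)ᵗ = S Cᵗ S⁻¹ → 0`, and the error `v t - v̄_ref = (I - XK)ᵗ (v 0 - v̄_ref)` tends to `0`.
-/

open Matrix Filter Topology
open scoped ComplexOrder

theorem Matrix.tendsto_of_mulVec_recurrence {α n : Type*} [Semiring α] [TopologicalSpace α]
    [IsTopologicalSemiring α] [Fintype n] [DecidableEq n] {A : Matrix n n α}
    {e : ℕ → n → α} (hA : Tendsto (A ^ ·) atTop (𝓝 0)) (he : ∀ t, e (t + 1) = A *ᵥ e t) :
    Tendsto e atTop (𝓝 0) := by
  have hpow : ∀ t, e t = A ^ t *ᵥ e 0 := fun t => by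
    induction t with
    | zero => simp
    | succ t ih => rw [he, ih, mulVec_mulVec, ← pow_succ']
  have hcont : Continuous fun M : Matrix n n α => M *ᵥ e 0 :=
    continuous_id.matrix_mulVec continuous_const
  rw [tendsto_congr hpow, ← zero_mulVec (e 0)]
  exact (hcont.tendsto 0).comp hA

section

variable {𝕜 n : Type*} [RCLike 𝕜] [Fintype n] [DecidableEq n] {B : Matrix n n 𝕜}

theorem Matrix.IsHermitian.abs_eigenvalues_lt_one (hB : B.IsHermitian) (h₁ : (1 - B).PosDef)
    (h₂ : (1 + B).PosDef) (i : n) : |hB.eigenvalues i| < 1 := by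
  set u : n → 𝕜 := ⇑(hB.eigenvectorBasis i)
  have hu : u ≠ 0 := fun h =>
    hB.eigenvectorBasis.orthonormal.ne_zero i (by ext j; exact congrFun h j)
  have hnorm : RCLike.re (star u ⬝ᵥ u) = 1 := by
    rw [dotProduct_comm, ← EuclideanSpace.inner_eq_star_dotProduct, inner_self_eq_norm_sq_to_K,
      hB.eigenvectorBasis.orthonormal.1 i]
    simp
  have p₁ := h₁.re_dotProduct_pos hu
  have p₂ := h₂.re_dotProduct_pos hu
  rw [sub_mulVec, one_mulVec, dotProduct_sub, map_sub, hnorm, ← hB.eigenvalues_eq] at p₁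
  rw [add_mulVec, one_mulVec, dotProduct_add, map_add, hnorm, ← hB.eigenvalues_eq] at p₂
  exact abs_lt.2 ⟨by linarith, by linarith⟩

theorem Matrix.IsHermitian.tendsto_pow_atTop_nhds_zero (hB : B.IsHermitian)
    (h : ∀ i, |hB.eigenvalues i| < 1) : Tendsto (B ^ ·) atTop (𝓝 0) := by
  set φ := Unitary.conjStarAlgAut 𝕜 (Matrix n n 𝕜) hB.eigenvectorUnitary
  set D := diagonal (RCLike.ofReal ∘ hB.eigenvalues : n → 𝕜)
  have hpow : ∀ t : ℕ, B ^ t = φ (D ^ t) := fun t => by rw [map_pow, ← hB.spectral_theorem]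
  have hD : Tendsto (D ^ ·) atTop (𝓝 0) := by
    simp_rw [D, diagonal_pow, ← diagonal_zero]
    refine (continuous_id.matrix_diagonal.tendsto _).comp (tendsto_pi_nhds.2 fun i => ?_)
    simpa using tendsto_pow_atTop_nhds_zero_of_norm_lt_one (by simpa using h i)
  have hφ : Continuous φ := by
    have hU : Continuous fun A : Matrix n n 𝕜 =>
        hB.eigenvectorUnitary * A * star (hB.eigenvectorUnitary : Matrix n n 𝕜) := by
      fun_prop
    exact hU.congr fun A => (Unitary.conjStarAlgAut_apply _ A).symm
  rw [tendsto_congr hpow, ← map_zero φ]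
  exact (hφ.tendsto 0).comp hD

open scoped MatrixOrder in
theorem Matrix.tendsto_pow_one_sub_mul_atTop_nhds_zero {X K : Matrix n n 𝕜} (hX : X.PosDef)
    (hK : K.PosDef) (hK₂ : ((2 : 𝕜) • X⁻¹ - K).PosDef) :
    Tendsto ((1 - X * K) ^ ·) atTop (𝓝 0) := by
  set S := CFC.sqrt X
  have hS : S.IsHermitian := (CFC.sqrt_nonneg X).posSemidef.isHermitian
  have hSS : S * S = X := CFC.sqrt_mul_sqrt_self X hX.posSemidef.nonneg
  have hSunit : IsUnit S := ((Commute.refl S).isUnit_mul_iff.mp (hSS ▸ hX.isUnit)).1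
  have hSdet : IsUnit S.det := (isUnit_iff_isUnit_det S).1 hSunit
  have hSXS : S * X⁻¹ * S = 1 := by
    rw [← hSS, Matrix.mul_inv_rev, ← Matrix.mul_assoc, mul_nonsing_inv _ hSdet, Matrix.one_mul,
      nonsing_inv_mul _ hSdet]
  set C := 1 - S * K * S with hCdef
  have h₁ : (1 - C).PosDef := by
    rw [sub_sub_cancel]
    nth_rewrite 1 [← hS.eq]
    exact hSunit.posDef_star_left_conjugate_iff.2 hK
  have h₂ : (1 + C).PosDef := by
    have : 1 + C = Sᴴ * ((2 : 𝕜) • X⁻¹ - K) * S := by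
      rw [hS.eq, Matrix.mul_sub, Matrix.sub_mul, mul_smul_comm, smul_mul_assoc, hSXS, two_smul,
        hCdef]
      abel
    rw [this]
    exact hSunit.posDef_star_left_conjugate_iff.2 hK₂
  have hC : C.IsHermitian := by simpa using isHermitian_one.sub h₁.isHermitian
  have hsemi : SemiconjBy S C (1 - X * K) := by
    rw [SemiconjBy, hCdef, ← hSS]
    noncomm_ring
  have hpow : ∀ t : ℕ, (1 - X * K) ^ t = S * C ^ t * S⁻¹ := fun t => by
    rw [(hsemi.pow_right t).eq, mul_nonsing_inv_cancel_right _ _ hSdet]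
  rw [tendsto_congr hpow]
  have hCpow := hC.tendsto_pow_atTop_nhds_zero (hC.abs_eigenvalues_lt_one h₁ h₂)
  simpa using (hCpow.const_mul S).mul_const S⁻¹

end

theorem stmt_18_general {n : ℕ} (R X K : Matrix (Fin n) (Fin n) ℝ)
    (hX : X.PosDef)
    (hK : K.PosDef) (hK2 : ((2 : ℝ) • X⁻¹ - K).PosDef)
    (pbar vrefbar : Fin n → ℝ)
    (v q : ℕ → Fin n → ℝ)
    (hv : ∀ t, v t = R.mulVec pbar + X.mulVec (q t) + 1)
    (hq : ∀ t, q (t + 1) = q t - K.mulVec (v t - vrefbar)) :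
    Filter.Tendsto v Filter.atTop (nhds vrefbar) := by
  have herr : ∀ t, v (t + 1) - vrefbar = (1 - X * K) *ᵥ (v t - vrefbar) := fun t => by
    rw [hv (t + 1), hq t, hv t, mulVec_sub, sub_mulVec, one_mulVec, ← mulVec_mulVec]
    abel
  have herr_tendsto : Tendsto (fun t => v t - vrefbar) atTop (𝓝 0) :=
    tendsto_of_mulVec_recurrence (tendsto_pow_one_sub_mul_atTop_nhds_zero hX hK hK2) herr
  simpa using herr_tendsto.add_const vrefbar

theorem stmt_18 {n : ℕ} (R X K : Matrix (Fin n) (Fin n) ℝ)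
    (hX : X.PosDef)
    (hKdiag : K.IsDiag) (hK : K.PosDef) (hK2 : ((2 : ℝ) • X⁻¹ - K).PosDef)
    (pbar vrefbar : Fin n → ℝ)
    (v q : ℕ → Fin n → ℝ)
    (hv : ∀ t, v t = R.mulVec pbar + X.mulVec (q t) + 1)
    (hq : ∀ t, q (t + 1) = q t - K.mulVec (v t - vrefbar)) :
    Filter.Tendsto v Filter.atTop (nhds vrefbar) :=
  stmt_18_general R X K hX hK hK2 pbar vrefbar v q hv hq
end
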